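/- Let a, b > −1 and x < y < w be real numbers. Then ∫ₓ^y (y−u)^b (w−u)^c (u−x)^a du = [Γ(a+1)Γ(b+1)/Γ(a+b+2)] · (y−x)^{1+a+b} (w−x)^c · F(−c, a+1, a+b+2, (y−x)/(w−x)). -/

import Mathlib

open MeasureTheory Real Set Filter
open scoped Nat Topology

lemma tendsto_aux (C : ℝ) : Tendsto (fun k : ℕ => (C + (k:ℝ)) / ((k:ℝ) + 1)) atTop (𝓝 1) := by
  have base : Tendsto (fun k : ℕ => ((k:ℝ) + 1)) atTop atTop :=
    tendsto_atTop_add_const_right _ 1 tendsto_natCast_atTop_atTop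
  have h0 : Tendsto (fun k : ℕ => (C - 1) / ((k:ℝ) + 1) + 1) atTop (𝓝 (0 + 1)) :=
    (Tendsto.div_atTop tendsto_const_nhds base).add tendsto_const_nhds
  rw [zero_add] at h0
  refine h0.congr fun k => ?_
  have hk : ((k:ℝ) + 1) ≠ 0 := by positivity
  field_simp
  ring

lemma master_summable (r : ℝ) {s : ℝ} (hs0 : 0 < s) (hs1 : s < 1) :
    Summable (fun k : ℕ => |(ascPochhammer ℝ k).eval r| / (Nat.factorial k) * ((k:ℝ) + 1) * s ^ k) := by
  set f : ℕ → ℝ := fun k => |(ascPochhammer ℝ k).eval r| / (Nat.factorial k) * ((k:ℝ) + 1) * s ^ k with hf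
  have hfnn : ∀ k, 0 ≤ f k := fun k => by
    have : (0:ℝ) ≤ |(ascPochhammer ℝ k).eval r| := abs_nonneg _
    positivity
  have hrat : Tendsto (fun k : ℕ => s * ((|r| + (k:ℝ)) / ((k:ℝ) + 1)) * (((k:ℝ) + 2) / ((k:ℝ) + 1)))
      atTop (𝓝 (s * 1 * 1)) := by
    have h2 : Tendsto (fun k : ℕ => ((k:ℝ) + 2) / ((k:ℝ) + 1)) atTop (𝓝 1) := by
      have := tendsto_aux 2
      refine this.congr fun k => by ring_nf
    exact ((tendsto_const_nhds.mul (tendsto_aux |r|)).mul h2)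
  rw [mul_one, mul_one] at hrat
  have hev : ∀ᶠ k : ℕ in atTop,
      s * ((|r| + (k:ℝ)) / ((k:ℝ) + 1)) * (((k:ℝ) + 2) / ((k:ℝ) + 1)) < (1 + s) / 2 := by
    apply hrat.eventually_lt_const
    linarith
  refine summable_of_ratio_norm_eventually_le (r := (1 + s) / 2) (by linarith) ?_
  filter_upwards [hev] with k hk
  have hkfac : (0:ℝ) < (Nat.factorial k : ℝ) := by positivity
  have hk1 : (0:ℝ) < (k:ℝ) + 1 := by positivity
  have habs : |(ascPochhammer ℝ (k+1)).eval r| ≤ |(ascPochhammer ℝ k).eval r| * (|r| + k) := by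
    rw [ascPochhammer_succ_eval, abs_mul]
    exact mul_le_mul_of_nonneg_left ((abs_add_le _ _).trans (by simp)) (abs_nonneg _)
  have hnorm : ∀ k, ‖f k‖ = f k := fun k => Real.norm_of_nonneg (hfnn k)
  rw [hnorm, hnorm]
  have e1 : f (k+1) = |(ascPochhammer ℝ (k+1)).eval r| / (Nat.factorial (k+1)) *
      ((k:ℝ) + 2) * s ^ (k+1) := by
    simp only [hf]; push_cast; ring
  have step1 : f (k+1) ≤ |(ascPochhammer ℝ k).eval r| * (|r| + k) / (Nat.factorial (k+1)) *
      ((k:ℝ) + 2) * s ^ (k+1) := by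
    rw [e1]
    gcongr
  have step2 : |(ascPochhammer ℝ k).eval r| * (|r| + k) / (Nat.factorial (k+1)) *
      ((k:ℝ) + 2) * s ^ (k+1) =
      (s * ((|r| + (k:ℝ)) / ((k:ℝ) + 1)) * (((k:ℝ) + 2) / ((k:ℝ) + 1))) * f k := by
    simp only [hf, Nat.factorial_succ]
    push_cast
    field_simp
    ring
  calc f (k+1) ≤ _ := step1
    _ = _ := step2
    _ ≤ (1 + s)/2 * f k := mul_le_mul_of_nonneg_right hk.le (hfnn k)

lemma hasSum_binomial (r : ℝ) {t : ℝ} (ht0 : 0 ≤ t) (ht1 : t < 1) :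
    HasSum (fun k : ℕ => (ascPochhammer ℝ k).eval r * t ^ k / (Nat.factorial k))
      ((1 - t) ^ (-r)) := by
  set p : ℕ → ℝ := fun k => (ascPochhammer ℝ k).eval r / (Nat.factorial k) with hp
  set s : ℝ := (1 + t) / 2 with hsdef
  have hs0 : 0 < s := by rw [hsdef]; linarith
  have hs1 : s < 1 := by rw [hsdef]; linarith
  have hts : t < s := by rw [hsdef]; linarith
  have habsp : ∀ k : ℕ, |p k| = |(ascPochhammer ℝ k).eval r| / (Nat.factorial k) := by
    intro k
    rw [hp, abs_div, abs_of_nonneg (by positivity : (0:ℝ) ≤ (Nat.factorial k : ℝ))]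
  have hpk : ∀ k : ℕ, p (k+1) * ((k:ℝ) + 1) = p k * (r + k) := by
    intro k
    rw [hp]
    simp only [ascPochhammer_succ_eval, Nat.factorial_succ]
    have h1 : ((Nat.factorial k : ℝ)) ≠ 0 := by positivity
    have h2 : ((k:ℝ) + 1) ≠ 0 := by positivity
    push_cast
    field_simp
  -- summability of the series itself
  have hsum : ∀ y : ℝ, |y| < s → Summable (fun k : ℕ => p k * y ^ k) := by
    intro y hy
    refine Summable.of_norm_bounded (master_summable r hs0 hs1) ?_
    intro k
    rw [norm_mul, Real.norm_eq_abs, Real.norm_eq_abs, habsp, abs_pow]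
    have hone : (1:ℝ) ≤ (k:ℝ) + 1 := by
      have := Nat.cast_nonneg (α := ℝ) k; linarith
    calc |(ascPochhammer ℝ k).eval r| / (Nat.factorial k) * |y| ^ k
        ≤ |(ascPochhammer ℝ k).eval r| / (Nat.factorial k) * (((k:ℝ)+1) * s ^ k) := by
          have hyk : |y| ^ k ≤ ((k:ℝ)+1) * s ^ k := by
            have h1 : |y| ^ k ≤ s ^ k := pow_le_pow_left₀ (abs_nonneg y) hy.le k
            have h2 : s ^ k ≤ ((k:ℝ)+1) * s ^ k :=
              le_mul_of_one_le_left (by positivity) hone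
            linarith
          exact mul_le_mul_of_nonneg_left hyk (by positivity)
      _ = _ := by ring
  -- bound for the derivative series
  set u : ℕ → ℝ := fun k => |(ascPochhammer ℝ k).eval r| / (Nat.factorial k) * ((k:ℝ) + 1) * s ^ k / s with hu
  have husum : Summable u := (master_summable r hs0 hs1).div_const s
  have hbound : ∀ (k : ℕ) (z : ℝ), |z| < s → ‖p k * ((k:ℝ) * z ^ (k-1))‖ ≤ u k := by
    intro k z hz
    rw [norm_mul, Real.norm_eq_abs, Real.norm_eq_abs, habsp, abs_mul, abs_pow,
      Nat.abs_cast, hu]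
    match k with
    | 0 => simp; positivity
    | (k+1) =>
      simp only [Nat.add_sub_cancel]
      rw [le_div_iff₀ hs0]
      push_cast
      have hzk : |z| ^ k ≤ s ^ k := pow_le_pow_left₀ (abs_nonneg z) hz.le k
      have h1 : |z| ^ k * s ≤ s ^ (k+1) := by
        rw [pow_succ]
        exact mul_le_mul_of_nonneg_right hzk hs0.le
      have hC : (0:ℝ) ≤ |(ascPochhammer ℝ (k+1)).eval r| / ((Nat.factorial (k+1) : ℝ)) := by
        positivity
      have h2 := mul_le_mul_of_nonneg_left h1
        (mul_nonneg hC (by positivity : (0:ℝ) ≤ (k:ℝ) + 1))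
      have h3 : (0:ℝ) ≤ |(ascPochhammer ℝ (k+1)).eval r| / ((Nat.factorial (k+1) : ℝ)) *
          s ^ (k+1) := by positivity
      push_cast at h2 ⊢
      nlinarith [h2, h3]
  set S : ℝ → ℝ := fun y => ∑' k : ℕ, p k * y ^ k with hS
  set D : ℝ → ℝ := fun y => ∑' k : ℕ, p k * ((k:ℝ) * y ^ (k-1)) with hD
  have h0mem : (0:ℝ) ∈ Ioo (-s) s := ⟨by linarith, hs0⟩
  have hg0 : Summable (fun k : ℕ => p k * (0:ℝ) ^ k) := by
    refine summable_of_ne_finset_zero (s := ({0} : Finset ℕ)) ?_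
    intro k hk
    have : k ≠ 0 := Finset.notMem_singleton.mp hk
    simp [zero_pow this]
  have hderiv : ∀ y ∈ Ioo (-s) s, HasDerivAt S (D y) y := by
    intro y hy
    exact hasDerivAt_tsum_of_isPreconnected husum isOpen_Ioo (convex_Ioo _ _).isPreconnected
      (fun k z _ => (hasDerivAt_pow k z).const_mul (p k))
      (fun k z hz => hbound k z (abs_lt.2 ⟨hz.1, hz.2⟩)) h0mem hg0 hy
  have hrec : ∀ y ∈ Ioo (-s) s, (1 - y) * D y = r * S y := by
    intro y hy
    have hy' : |y| < s := abs_lt.2 ⟨hy.1, hy.2⟩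
    have hsumD : Summable (fun k : ℕ => p k * ((k:ℝ) * y ^ (k-1))) :=
      Summable.of_norm_bounded husum (fun k => hbound k y hy')
    have hDs : HasSum (fun k : ℕ => p k * ((k:ℝ) * y ^ (k-1))) (D y) := hsumD.hasSum
    have hA : HasSum (fun k : ℕ => p k * (r + k) * y ^ k) (D y) := by
      have h1 : HasSum (fun k : ℕ => p (k+1) * (((k+1:ℕ):ℝ) * y ^ ((k+1)-1))) (D y) := by
        refine (hasSum_nat_add_iff (f := fun k : ℕ => p k * ((k:ℝ) * y ^ (k-1))) 1).mpr ?_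
        simpa using hDs
      have he : (fun k : ℕ => p (k+1) * (((k+1:ℕ):ℝ) * y ^ ((k+1)-1)))
          = fun k : ℕ => p k * (r + k) * y ^ k := by
        funext k
        simp only [Nat.add_sub_cancel]
        push_cast
        linear_combination y ^ k * hpk k
      rwa [he] at h1
    have hC : HasSum (fun k : ℕ => (k:ℝ) * (p k * y ^ k)) (y * D y) := by
      have h1 : HasSum (fun k : ℕ => y * (p k * (r + k) * y ^ k)) (y * D y) := hA.mul_left y
      have he : (fun k : ℕ => ((k+1:ℕ):ℝ) * (p (k+1) * y ^ (k+1)))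
          = fun k : ℕ => y * (p k * (r + k) * y ^ k) := by
        funext k
        push_cast
        linear_combination y ^ (k+1) * hpk k
      rw [← he] at h1
      have h2 := (hasSum_nat_add_iff (f := fun k : ℕ => (k:ℝ) * (p k * y ^ k)) 1).mp h1
      simpa using h2
    have hB : HasSum (fun k : ℕ => p k * y ^ k) (S y) := (hsum y hy').hasSum
    have hsub : HasSum (fun k : ℕ => p k * (r + k) * y ^ k - (k:ℝ) * (p k * y ^ k))
        (D y - y * D y) := hA.sub hC
    have he2 : (fun k : ℕ => p k * (r + k) * y ^ k - (k:ℝ) * (p k * y ^ k))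
        = fun k : ℕ => r * (p k * y ^ k) := by
      funext k; ring
    rw [he2] at hsub
    have huniq := hsub.unique (hB.mul_left r)
    linear_combination huniq
  -- the ODE argument
  have hG : ∀ y ∈ Ioo (-s) s, HasDerivAt (fun y => S y * (1 - y) ^ r) 0 y := by
    intro y hy
    have h1y : 0 < 1 - y := by linarith [hy.2]
    have hpow : HasDerivAt (fun y : ℝ => (1 - y) ^ r) (r * (1 - y) ^ (r - 1) * (-1)) y := by
      have h1 : HasDerivAt (fun x : ℝ => x ^ r) (r * (1 - y) ^ (r - 1)) (1 - y) :=
        Real.hasDerivAt_rpow_const (Or.inl h1y.ne')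
      have h2 : HasDerivAt (fun y : ℝ => 1 - y) (-1) y := (hasDerivAt_id y).const_sub 1
      exact h1.comp y h2
    have total := (hderiv y hy).mul hpow
    have e : (1 - y) ^ r = (1 - y) * (1 - y) ^ (r - 1) := by
      have e1 := Real.rpow_add h1y 1 (r - 1)
      rw [Real.rpow_one] at e1
      have e2 : 1 + (r - 1) = r := by ring
      rwa [e2] at e1
    have key : D y * (1 - y) ^ r + S y * (r * (1 - y) ^ (r - 1) * (-1)) = 0 := by
      rw [e]
      have hr2 := hrec y hy
      linear_combination ((1 - y) ^ (r - 1)) * hr2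
    rw [key] at total
    exact total
  have hmem : ∀ y ∈ Icc (0:ℝ) t, y ∈ Ioo (-s) s := fun y hy =>
    ⟨by linarith [hy.1], by linarith [hy.2]⟩
  have hcont : ContinuousOn (fun y => S y * (1 - y) ^ r) (Icc 0 t) := fun y hy =>
    ((hG y (hmem y hy)).continuousAt).continuousWithinAt
  have hder2 : ∀ y ∈ Ico 0 t, HasDerivWithinAt (fun y => S y * (1 - y) ^ r) 0 (Ici y) y :=
    fun y hy => (hG y (hmem y ⟨hy.1, hy.2.le⟩)).hasDerivWithinAt
  have hGt := constant_of_has_deriv_right_zero hcont hder2 t (right_mem_Icc.mpr ht0)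
  have hS0 : S 0 = 1 := by
    have e0 : S 0 = ∑' k : ℕ, p k * (0:ℝ) ^ k := rfl
    rw [e0, tsum_eq_single 0 (fun k hk => by simp [zero_pow hk])]
    simp [hp]
  have hG0 : S t * (1 - t) ^ r = 1 := by
    rw [hGt]
    simp [hS0]
  have h1t : 0 < 1 - t := by linarith
  have hrne : (1 - t) ^ r ≠ 0 := (Real.rpow_pos_of_pos h1t r).ne'
  have hSt : S t = (1 - t) ^ (-r) := by
    rw [Real.rpow_neg h1t.le]
    field_simp
    linear_combination hG0
  have hfin : HasSum (fun k : ℕ => p k * t ^ k) (S t) :=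
    (hsum t (by rwa [abs_of_nonneg ht0])).hasSum
  rw [hSt] at hfin
  have he3 : (fun k : ℕ => p k * t ^ k)
      = fun k : ℕ => (ascPochhammer ℝ k).eval r * t ^ k / (Nat.factorial k) := by
    funext k; rw [hp]; ring
  rwa [he3] at hfin

lemma betaIntegrable {u v : ℝ} (hu : 0 < u) (hv : 0 < v) :
    IntegrableOn (fun x : ℝ => x ^ (u-1) * (1-x) ^ (v-1)) (Ioc 0 1) volume := by
  have hc := Complex.betaIntegral_convergent (u := (u:ℂ)) (v := (v:ℂ)) (by simpa) (by simpa)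
  rw [intervalIntegrable_iff, uIoc_of_le zero_le_one] at hc
  have hn : IntegrableOn
      (fun x : ℝ => ‖(x:ℂ) ^ ((u:ℂ)-1) * (1-(x:ℂ)) ^ ((v:ℂ)-1)‖) (Ioc 0 1) volume := hc.norm
  have hIoo : IntegrableOn (fun x : ℝ => x ^ (u-1) * (1-x) ^ (v-1)) (Ioo 0 1) volume := by
    refine (hn.mono_set Ioo_subset_Ioc_self).congr_fun ?_ measurableSet_Ioo
    intro x hx
    have hx0 : (0:ℝ) < x := hx.1
    have hx1 : (0:ℝ) < 1 - x := by linarith [hx.2]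
    have e1 : ((1:ℂ) - (x:ℝ)) = ((1 - x : ℝ) : ℂ) := by push_cast; ring
    show ‖(x:ℂ) ^ ((u:ℂ)-1) * (1-(x:ℂ)) ^ ((v:ℂ)-1)‖ = x ^ (u-1) * (1-x) ^ (v-1)
    rw [norm_mul, e1,
      Complex.norm_cpow_eq_rpow_re_of_pos hx0, Complex.norm_cpow_eq_rpow_re_of_pos hx1]
    norm_num
  exact hIoo.congr_set_ae Ioo_ae_eq_Ioc.symm

lemma betaValue {u v : ℝ} (hu : 0 < u) (hv : 0 < v) :
    ∫ x in Ioc (0:ℝ) 1, x ^ (u-1) * (1-x) ^ (v-1) =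
      Real.Gamma u * Real.Gamma v / Real.Gamma (u+v) := by
  have key : Complex.Gamma u * Complex.Gamma v = Complex.Gamma (u+v) * Complex.betaIntegral u v :=
    Complex.Gamma_mul_Gamma_eq_betaIntegral (by simpa) (by simpa)
  have hbeta : Complex.betaIntegral u v
      = ((∫ x in (0:ℝ)..1, x ^ (u-1) * (1-x) ^ (v-1) : ℝ) : ℂ) := by
    rw [Complex.betaIntegral, ← intervalIntegral.integral_ofReal]
    refine intervalIntegral.integral_congr ?_
    intro x hx
    rw [uIcc_of_le zero_le_one] at hx
    have hx0 : (0:ℝ) ≤ x := hx.1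
    have hx1 : (0:ℝ) ≤ 1 - x := by linarith [hx.2]
    simp only [Complex.ofReal_mul, Complex.ofReal_cpow hx0, Complex.ofReal_cpow hx1,
      Complex.ofReal_sub, Complex.ofReal_one]
  have hcast : ((u:ℂ) + (v:ℂ)) = ((u + v : ℝ) : ℂ) := by push_cast; ring
  rw [hbeta, hcast, Complex.Gamma_ofReal, Complex.Gamma_ofReal, Complex.Gamma_ofReal,
    ← Complex.ofReal_mul, ← Complex.ofReal_mul] at key
  have hreal := Complex.ofReal_inj.mp key
  have hg : (0:ℝ) < Real.Gamma (u + v) := Real.Gamma_pos_of_pos (by linarith)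
  rw [← intervalIntegral.integral_of_le zero_le_one]
  field_simp
  linarith [hreal]

lemma Gamma_add_nat {x : ℝ} (hx : 0 < x) (k : ℕ) :
    Real.Gamma (x + k) = Real.Gamma x * (ascPochhammer ℝ k).eval x := by
  induction k with
  | zero => simp
  | succ n ih =>
    have hxn : (0:ℝ) < x + n := by positivity
    have e1 : x + ((n:ℕ)+1:ℝ) = (x + n) + 1 := by ring
    rw [show ((n+1:ℕ):ℝ) = (n:ℝ)+1 by push_cast; ring, e1, Real.Gamma_add_one hxn.ne',
      ih, ascPochhammer_succ_eval]
    ring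

lemma rpow_int_integrable {a b : ℝ} (ha : -1 < a) (hb : -1 < b) (k : ℕ) :
    IntegrableOn (fun v : ℝ => v ^ (a + (k:ℝ)) * (1 - v) ^ b) (Ioc 0 1) volume := by
  have hk0 : (0:ℝ) ≤ (k:ℝ) := Nat.cast_nonneg k
  have h1 : IntegrableOn (fun v : ℝ => v ^ ((a+1+(k:ℝ))-1) * (1-v) ^ ((b+1)-1)) (Ioc 0 1) volume :=
    betaIntegrable (by linarith) (by linarith)
  have e : (fun v : ℝ => v ^ ((a+1+(k:ℝ))-1) * (1-v) ^ ((b+1)-1))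
      = fun v : ℝ => v ^ (a + (k:ℝ)) * (1 - v) ^ b := by
    funext v
    rw [show a+1+(k:ℝ)-1 = a + (k:ℝ) by ring, show b+1-1 = b by ring]
  rwa [e] at h1

lemma J_eq (a b c z : ℝ) (ha : -1 < a) (hb : -1 < b) (hz0 : 0 < z) (hz1 : z < 1) :
    ∫ v in (0:ℝ)..1, v ^ a * (1 - v) ^ b * (1 - z * v) ^ c =
      Real.Gamma (a+1) * Real.Gamma (b+1) / Real.Gamma (a+b+2) *
        ∑' k : ℕ, ((ascPochhammer ℝ k).eval (-c) * (ascPochhammer ℝ k).eval (a+1) /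
          (ascPochhammer ℝ k).eval (a+b+2)) * z ^ k / (Nat.factorial k) := by
  have ha1 : (0:ℝ) < a + 1 := by linarith
  have hb1 : (0:ℝ) < b + 1 := by linarith
  have hab2 : (0:ℝ) < a + b + 2 := by linarith
  set F : ℕ → ℝ → ℝ := fun k v =>
    (ascPochhammer ℝ k).eval (-c) * z ^ k / (Nat.factorial k) * (v ^ (a + (k:ℝ)) * (1 - v) ^ b)
    with hF
  have hFint : ∀ k : ℕ, Integrable (F k) (volume.restrict (Ioc (0:ℝ) 1)) := fun k =>
    (rpow_int_integrable ha hb k).const_mul _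
  -- value of each integral
  have hFval : ∀ k : ℕ, (∫ v in Ioc (0:ℝ) 1, F k v) =
      (ascPochhammer ℝ k).eval (-c) * z ^ k / (Nat.factorial k) *
        (Real.Gamma (a+1) * (ascPochhammer ℝ k).eval (a+1) * Real.Gamma (b+1) /
          (Real.Gamma (a+b+2) * (ascPochhammer ℝ k).eval (a+b+2))) := by
    intro k
    have hk0 : (0:ℝ) ≤ (k:ℝ) := Nat.cast_nonneg k
    rw [hF]
    rw [MeasureTheory.integral_const_mul]
    have hval := betaValue (u := a+1+(k:ℝ)) (v := b+1) (by linarith) hb1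
    have e : (fun v : ℝ => v ^ ((a+1+(k:ℝ))-1) * (1-v) ^ ((b+1)-1))
        = fun v : ℝ => v ^ (a + (k:ℝ)) * (1 - v) ^ b := by
      funext v
      rw [show a+1+(k:ℝ)-1 = a + (k:ℝ) by ring, show b+1-1 = b by ring]
    rw [show a+1+(k:ℝ)-1 = a + (k:ℝ) by ring, show b+1-1 = b by ring,
      show a+1+(k:ℝ)+(b+1) = a+b+2+(k:ℝ) by ring,
      show a+1+(k:ℝ) = (a+1)+(k:ℝ) by ring] at hval
    rw [hval, Gamma_add_nat ha1 k, Gamma_add_nat hab2 k]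
  -- nonnegativity of B0 and the comparison
  set B0 : ℝ := ∫ v in Ioc (0:ℝ) 1, v ^ a * (1-v) ^ b with hB0
  have hB0int : IntegrableOn (fun v : ℝ => v ^ a * (1-v) ^ b) (Ioc 0 1) volume := by
    have := rpow_int_integrable ha hb 0
    simpa using this
  have hnormval : ∀ k : ℕ, (∫ v in Ioc (0:ℝ) 1, ‖F k v‖) ≤
      |(ascPochhammer ℝ k).eval (-c)| / (Nat.factorial k) * ((k:ℝ)+1) * z ^ k * B0 := by
    intro k
    have hk0 : (0:ℝ) ≤ (k:ℝ) := Nat.cast_nonneg k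
    have heq : (∫ v in Ioc (0:ℝ) 1, ‖F k v‖) =
        |(ascPochhammer ℝ k).eval (-c) * z ^ k / (Nat.factorial k)| *
          ∫ v in Ioc (0:ℝ) 1, v ^ (a+(k:ℝ)) * (1-v) ^ b := by
      rw [← MeasureTheory.integral_const_mul]
      refine setIntegral_congr_fun measurableSet_Ioc ?_
      intro v hv
      have hv0 : (0:ℝ) < v := hv.1
      have hnn : 0 ≤ v ^ (a+(k:ℝ)) * (1-v) ^ b :=
        mul_nonneg (Real.rpow_nonneg hv0.le _)
          (Real.rpow_nonneg (by linarith [hv.2] : (0:ℝ) ≤ 1 - v) _)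
      show ‖F k v‖ = _
      rw [hF]
      rw [Real.norm_eq_abs, abs_mul, abs_of_nonneg hnn]
    rw [heq]
    have hIk : (∫ v in Ioc (0:ℝ) 1, v ^ (a+(k:ℝ)) * (1-v) ^ b) ≤ B0 := by
      refine setIntegral_mono_on (rpow_int_integrable ha hb k) hB0int measurableSet_Ioc ?_
      intro v hv
      have hv0 : (0:ℝ) < v := hv.1
      have h1 : v ^ (a+(k:ℝ)) ≤ v ^ a :=
        Real.rpow_le_rpow_of_exponent_ge hv0 hv.2 (by linarith)
      exact mul_le_mul_of_nonneg_right h1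
        (Real.rpow_nonneg (by linarith [hv.2] : (0:ℝ) ≤ 1 - v) _)
    have hIk0 : (0:ℝ) ≤ ∫ v in Ioc (0:ℝ) 1, v ^ (a+(k:ℝ)) * (1-v) ^ b := by
      refine setIntegral_nonneg measurableSet_Ioc ?_
      intro v hv
      exact mul_nonneg (Real.rpow_nonneg hv.1.le _)
        (Real.rpow_nonneg (by linarith [hv.2] : (0:ℝ) ≤ 1 - v) _)
    have habs : |(ascPochhammer ℝ k).eval (-c) * z ^ k / (Nat.factorial k)| ≤
        |(ascPochhammer ℝ k).eval (-c)| / (Nat.factorial k) * ((k:ℝ)+1) * z ^ k := by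
      rw [abs_div, abs_mul, abs_of_nonneg (by positivity : (0:ℝ) ≤ z ^ k),
        abs_of_nonneg (by positivity : (0:ℝ) ≤ ((Nat.factorial k : ℝ)))]
      have hone : (1:ℝ) ≤ (k:ℝ) + 1 := by linarith
      have : |(ascPochhammer ℝ k).eval (-c)| * z ^ k / (Nat.factorial k) ≤
          |(ascPochhammer ℝ k).eval (-c)| * z ^ k / (Nat.factorial k) * ((k:ℝ)+1) :=
        le_mul_of_one_le_right (by positivity) hone
      calc |(ascPochhammer ℝ k).eval (-c)| * z ^ k / (Nat.factorial k)
          ≤ |(ascPochhammer ℝ k).eval (-c)| * z ^ k / (Nat.factorial k) * ((k:ℝ)+1) := this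
        _ = |(ascPochhammer ℝ k).eval (-c)| / (Nat.factorial k) * ((k:ℝ)+1) * z ^ k := by ring
    calc |(ascPochhammer ℝ k).eval (-c) * z ^ k / (Nat.factorial k)| *
          (∫ v in Ioc (0:ℝ) 1, v ^ (a+(k:ℝ)) * (1-v) ^ b)
        ≤ (|(ascPochhammer ℝ k).eval (-c)| / (Nat.factorial k) * ((k:ℝ)+1) * z ^ k) * B0 := by
          refine mul_le_mul habs hIk hIk0 ?_
          positivity
      _ = _ := by ring
  have hB0nn : (0:ℝ) ≤ B0 := by
    rw [hB0]
    refine setIntegral_nonneg measurableSet_Ioc ?_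
    intro v hv
    exact mul_nonneg (Real.rpow_nonneg hv.1.le _)
      (Real.rpow_nonneg (by linarith [hv.2] : (0:ℝ) ≤ 1 - v) _)
  have hsummable : Summable (fun k : ℕ => ∫ v in Ioc (0:ℝ) 1, ‖F k v‖) := by
    refine Summable.of_nonneg_of_le
      (fun k => integral_nonneg (fun v => norm_nonneg _)) hnormval ?_
    exact (master_summable (-c) hz0 hz1).mul_right B0
  have hswap := MeasureTheory.integral_tsum_of_summable_integral_norm hFint hsummable
  have hpt : EqOn (fun v : ℝ => v ^ a * (1-v) ^ b * (1-z*v) ^ c)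
      (fun v : ℝ => ∑' k : ℕ, F k v) (Ioc 0 1) := by
    intro v hv
    have hv0 : (0:ℝ) < v := hv.1
    have ht0 : (0:ℝ) ≤ z * v := by positivity
    have ht1 : z * v < 1 := by
      have : z * v ≤ z := mul_le_of_le_one_right hz0.le hv.2
      linarith
    have hbin := hasSum_binomial (-c) ht0 ht1
    rw [neg_neg] at hbin
    have h2 := hbin.mul_left (v ^ a * (1-v) ^ b)
    have he : (fun k : ℕ => v ^ a * (1-v) ^ b *
        ((ascPochhammer ℝ k).eval (-c) * (z*v) ^ k / (Nat.factorial k)))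
        = fun k : ℕ => F k v := by
      funext k
      rw [hF]
      show _ = (ascPochhammer ℝ k).eval (-c) * z ^ k / (Nat.factorial k) *
        (v ^ (a + (k:ℝ)) * (1 - v) ^ b)
      rw [Real.rpow_add hv0, Real.rpow_natCast, mul_pow]
      ring
    rw [he] at h2
    exact h2.tsum_eq.symm
  rw [intervalIntegral.integral_of_le zero_le_one,
    setIntegral_congr_fun measurableSet_Ioc hpt, ← hswap]
  calc ∑' k : ℕ, ∫ v in Ioc (0:ℝ) 1, F k v
      = ∑' k : ℕ, Real.Gamma (a+1) * Real.Gamma (b+1) / Real.Gamma (a+b+2) *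
          ((ascPochhammer ℝ k).eval (-c) * (ascPochhammer ℝ k).eval (a+1) /
            (ascPochhammer ℝ k).eval (a+b+2) * z ^ k / (Nat.factorial k)) := by
        refine tsum_congr fun k => ?_
        rw [hFval k]
        ring
    _ = _ := tsum_mul_left

/-- The Gauss hypergeometric function: defined by the power series for `|z| < 1`,
and extended by the Euler integral representation otherwise (meaningful when `c > b > 0`). -/
noncomputable def hypF (a b c z : ℝ) : ℝ :=
  if |z| < 1 then
    ∑' k : ℕ, ((ascPochhammer ℝ k).eval a * (ascPochhammer ℝ k).eval b /
      (ascPochhammer ℝ k).eval c) * z ^ k / (Nat.factorial k)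
  else
    (Real.Gamma c / (Real.Gamma b * Real.Gamma (c - b))) *
      ∫ v in (0:ℝ)..1, v ^ (b - 1) * (1 - v) ^ (c - b - 1) * (1 - z * v) ^ (-a)

theorem integral_eq_hypF_of_gt (a b c w x y : ℝ) (ha : -1 < a) (hb : -1 < b)
    (hxy : x < y) (hyw : y < w) :
    ∫ u in x..y, (y - u) ^ b * (w - u) ^ c * (u - x) ^ a =
      Real.Gamma (a + 1) * Real.Gamma (b + 1) / Real.Gamma (a + b + 2) *
        (y - x) ^ (1 + a + b) * (w - x) ^ c *
        hypF (-c) (a + 1) (a + b + 2) ((y - x) / (w - x)) := by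
  have hs : 0 < y - x := sub_pos.mpr hxy
  have hwx : 0 < w - x := by linarith
  set z : ℝ := (y - x) / (w - x) with hz
  have hz0 : 0 < z := div_pos hs hwx
  have hz1 : z < 1 := (div_lt_one hwx).mpr (by linarith)
  have hsub := intervalIntegral.integral_comp_mul_add
    (a := 0) (b := 1) (f := fun u => (y - u) ^ b * (w - u) ^ c * (u - x) ^ a)
    (c := y - x) hs.ne' x
  rw [show (y-x) * 0 + x = x by ring, show (y-x) * 1 + x = y by ring] at hsub
  have step : (∫ u in x..y, (y - u) ^ b * (w - u) ^ c * (u - x) ^ a)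
      = (y-x) • ∫ t in (0:ℝ)..1,
          ((y - ((y-x)*t + x)) ^ b * (w - ((y-x)*t + x)) ^ c * (((y-x)*t + x) - x) ^ a) := by
    rw [hsub, smul_smul, mul_inv_cancel₀ hs.ne', one_smul]
  have hcong : (∫ t in (0:ℝ)..1,
        ((y - ((y-x)*t + x)) ^ b * (w - ((y-x)*t + x)) ^ c * (((y-x)*t + x) - x) ^ a))
      = ∫ t in (0:ℝ)..1, ((y-x) ^ a * (y-x) ^ b * (w-x) ^ c) *
          (t ^ a * (1-t) ^ b * (1 - z*t) ^ c) := by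
    refine intervalIntegral.integral_congr ?_
    intro t ht
    rw [uIcc_of_le zero_le_one] at ht
    obtain ⟨ht0, ht1⟩ := ht
    have hzt : 0 ≤ 1 - z * t := by
      have : z * t ≤ z := mul_le_of_le_one_right hz0.le ht1
      linarith
    have k1 : y - ((y-x)*t + x) = (y-x) * (1-t) := by ring
    have k2 : w - ((y-x)*t + x) = (w-x) * (1 - z*t) := by
      rw [hz]
      field_simp
      ring
    have k3 : ((y-x)*t + x) - x = (y-x) * t := by ring
    show (y - ((y-x)*t + x)) ^ b * (w - ((y-x)*t + x)) ^ c * (((y-x)*t + x) - x) ^ a = _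
    rw [k1, k2, k3, Real.mul_rpow hs.le (by linarith : (0:ℝ) ≤ 1 - t),
      Real.mul_rpow hwx.le hzt, Real.mul_rpow hs.le ht0]
    ring
  rw [step, hcong, intervalIntegral.integral_const_mul,
    J_eq a b c z ha hb hz0 hz1]
  rw [hypF, if_pos (by rw [abs_of_nonneg hz0.le]; exact hz1)]
  have hpow : (y-x) ^ (1+a+b) = (y-x) * ((y-x) ^ a * (y-x) ^ b) := by
    rw [show (1:ℝ)+a+b = (1+a)+b by ring, Real.rpow_add hs, Real.rpow_add hs, Real.rpow_one]
    ring
  rw [smul_eq_mul, hpow]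
  ring
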